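/- Let A and T be nonempty compact convex subsets of ℝⁿ and let s ≥ 0. Define Δ(s,A) := conv((A×{s}) ∪ ((A+sT)×{0})) ⊆ ℝⁿ⁺¹. Then Δ(s,A) = {(x,r) ∈ ℝⁿ×ℝ : 0 ≤ r ≤ s and x ∈ A + (s−r)·T}. -/

import Mathlib

/-! The right side contains both generating slices and is convex because `c ↦ A + c • T` is
concave: `a • (A + c • T) + b • (A + d • T) ⊆ A + (a c + b d) • T` for convex `A` and `T`.
Conversely, `(a + (s - r) • t, r)` lies on the segment from `(a, s)` to `(a + s • t, 0)`, at
parameter `r / s`. -/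

open Pointwise Set

section

variable {𝕜 E : Type*} [Field 𝕜] [LinearOrder 𝕜] [IsStrictOrderedRing 𝕜] [AddCommGroup E]
  [Module 𝕜 E] {A T : Set E}

theorem Convex.combo_add_smul_subset (hA : Convex 𝕜 A) (hT : Convex 𝕜 T) {a b c d : 𝕜}
    (ha : 0 ≤ a) (hb : 0 ≤ b) (hab : a + b = 1) (hc : 0 ≤ c) (hd : 0 ≤ d) :
    a • (A + c • T) + b • (A + d • T) ⊆ A + (a * c + b * d) • T := by
  rw [smul_add, smul_add, add_add_add_comm, smul_smul, smul_smul,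
    hT.add_smul (mul_nonneg ha hc) (mul_nonneg hb hd)]
  exact add_subset_add_right (hA.set_combo_subset ha hb hab)

theorem convex_setOf_mem_add_sub_smul (hA : Convex 𝕜 A) (hT : Convex 𝕜 T) (s : 𝕜) :
    Convex 𝕜 {p : E × 𝕜 | 0 ≤ p.2 ∧ p.2 ≤ s ∧ p.1 ∈ A + (s - p.2) • T} := by
  rintro ⟨x, r⟩ ⟨hr0, hrs, hx⟩ ⟨y, q⟩ ⟨hq0, hqs, hy⟩ a b ha hb hab
  have hcombo : s - (a * r + b * q) = a * (s - r) + b * (s - q) := by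
    linear_combination s * hab.symm
  simp only [mem_ofPred_eq, Prod.fst_add, Prod.snd_add, Prod.smul_fst, Prod.smul_snd,
    smul_eq_mul] at *
  refine ⟨by positivity, ?_, ?_⟩
  · calc a * r + b * q ≤ a * s + b * s := by gcongr
      _ = s := by rw [← add_mul, hab, one_mul]
  · rw [hcombo]
    exact hA.combo_add_smul_subset hT ha hb hab (sub_nonneg.2 hrs) (sub_nonneg.2 hqs)
      (add_mem_add (smul_mem_smul_set hx) (smul_mem_smul_set hy))

theorem Prod.mk_add_sub_smul_mem_segment (a t : E) {r s : 𝕜} (hr : 0 ≤ r) (hrs : r ≤ s) :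
    (a + (s - r) • t, r) ∈ segment 𝕜 (a, s) (a + s • t, 0) := by
  -- if `s = 0` then `r = 0`, so the junk value `r / 0 = 0` is harmless
  have hrs_mul : r / s * s = r := div_mul_cancel_of_imp fun hs => le_antisymm (hs ▸ hrs) hr
  refine ⟨r / s, 1 - r / s, div_nonneg hr (hr.trans hrs), sub_nonneg.2 (div_le_one_of_le₀ hrs
    (hr.trans hrs)), add_sub_cancel _ _, Prod.ext ?_ ?_⟩
  · simp only [Prod.fst_add, Prod.smul_fst, smul_add, smul_smul]
    rw [← add_assoc, ← add_smul, add_sub_cancel, one_smul, sub_mul, one_mul, hrs_mul]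
  · simp [hrs_mul]

end

theorem pushPull_eq_slices (n : ℕ) (A T : Set (Fin n → ℝ))
    (hTne : T.Nonempty)
    (hAv : Convex ℝ A) (hTv : Convex ℝ T)
    (s : ℝ) (hs : 0 ≤ s) :
    convexHull ℝ ((A ×ˢ ({s} : Set ℝ)) ∪ ((A + s • T) ×ˢ ({0} : Set ℝ))) =
      {p : (Fin n → ℝ) × ℝ | 0 ≤ p.2 ∧ p.2 ≤ s ∧ p.1 ∈ A + (s - p.2) • T} := by
  refine Subset.antisymm (convexHull_min ?_ (convex_setOf_mem_add_sub_smul hAv hTv s)) ?_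
  · rintro ⟨x, r⟩ (⟨hx, rfl : r = s⟩ | ⟨hx, rfl : r = 0⟩)
    · exact ⟨hs, le_rfl, by rwa [sub_self, zero_smul_set hTne, add_zero]⟩
    · exact ⟨le_rfl, hs, by rwa [sub_zero]⟩
  · rintro ⟨x, r⟩ ⟨hr0, hrs, hx⟩
    dsimp only at hr0 hrs hx
    obtain ⟨a, ha, _, ⟨t, ht, rfl⟩, rfl⟩ := hx
    refine segment_subset_convexHull ?_ ?_ (Prod.mk_add_sub_smul_mem_segment a t hr0 hrs)
    · exact Or.inl ⟨ha, rfl⟩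
    · exact Or.inr ⟨add_mem_add ha (smul_mem_smul_set ht), rfl⟩
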